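/- In a graph embedding, if the four flags of an edge e form an entire connected component (orbit of ⟨θ,σ,φ⟩), then either e is a loop at a vertex incident only with e, or e joins two vertices of size 2; in the first case deleting e decreases the genus by 2 − k where k ∈ {1,2} is the number of faces incident with e, and in the second case deleting e leaves the genus unchanged. -/

import Mathlib

def FPF {F : Type*} (π : Equiv.Perm F) : Prop := π * π = 1 ∧ ∀ x, π x ≠ x

def orbSet {F : Type*} (S : Set (Equiv.Perm F)) (x : F) : Set F :=
  MulAction.orbit (Subgroup.closure S) x

noncomputable def orbCount {F : Type*} (S : Set (Equiv.Perm F)) : ℕ :=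
  Nat.card (MulAction.orbitRel.Quotient (Subgroup.closure S) F)

noncomputable def genus {F : Type*} (θ σ' φ' : Equiv.Perm F) : ℤ :=
  (orbCount {θ, σ'} : ℤ) - orbCount {σ', φ'} - orbCount {θ, φ'} + 2 * orbCount {θ, σ', φ'}

def IsGraphEmb {F : Type*} (θ σ' φ' : Equiv.Perm F) : Prop :=
  FPF θ ∧ FPF σ' ∧ FPF φ' ∧ ∀ x : F, Nat.card (orbSet {θ, σ'} x) = 4

def IsEdgeDeletion {F : Type*} (σ' φ' : Equiv.Perm F) (e : Set F)
    (θ₀ σ₀ φ₀ : Equiv.Perm {f : F // f ∉ e}) (θ : Equiv.Perm F) : Prop :=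
  (∀ a : {f : F // f ∉ e}, (θ₀ a : F) = θ a ∧ (σ₀ a : F) = σ' a) ∧
  (∀ a : {f : F // f ∉ e}, ∃ m : ℕ,
     ((φ' * σ') ^ m) (φ' a) ∉ e ∧ (∀ j < m, ((φ' * σ') ^ j) (φ' a) ∈ e) ∧
     (φ₀ a : F) = ((φ' * σ') ^ m) (φ' a))

/-!
Since the edge `e` is a whole component, it is invariant under `θ`, `σ'` and `φ'`; so the
splice defining `φ₀` is trivial, and `θ₀`, `σ₀`, `φ₀` are plain restrictions to the complement
of `e`. Every orbit count then splits into the orbits inside `e` plus the orbits of the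
restriction, and the genus drops by `1 - v - f + 2`, where `v` and `f` count the vertices and
faces at `e`. A fixed-point-free involution makes every orbit inside the four flags of `e` have
at least two elements, so `v, f ∈ {1, 2}`; and when `v = 2` both vertices have two flags, which
forces `φ' = σ'` on `e`, so the face through `e` is all of `e` and `f = 1`.
-/

open Set Equiv

section Orbits

variable {F : Type*}

lemma mem_orbSet_self (S : Set (Perm F)) (x : F) : x ∈ orbSet S x :=
  MulAction.mem_orbit_self x

lemma orbSet_eq_of_mem {S : Set (Perm F)} {x y : F} (h : y ∈ orbSet S x) :
    orbSet S y = orbSet S x :=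
  MulAction.orbit_eq_iff.mpr h

lemma apply_mem_orbSet_iff {S : Set (Perm F)} {s : Perm F} (hs : s ∈ S) {x y : F} :
    s y ∈ orbSet S x ↔ y ∈ orbSet S x := by
  have hsy : orbSet S (s y) = orbSet S y :=
    MulAction.orbit_smul (⟨s, Subgroup.subset_closure hs⟩ : Subgroup.closure S) y
  constructor <;> intro h <;> rw [← orbSet_eq_of_mem h]
  · rw [hsy]; exact mem_orbSet_self S y
  · rw [← hsy]; exact mem_orbSet_self S (s y)

lemma apply_mem_orbSet {S : Set (Perm F)} {s : Perm F} (hs : s ∈ S) {x y : F}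
    (h : y ∈ orbSet S x) : s y ∈ orbSet S x :=
  (apply_mem_orbSet_iff hs).mpr h

lemma orbSet_mono {S T : Set (Perm F)} (h : S ⊆ T) (x : F) : orbSet S x ⊆ orbSet T x := by
  rintro _ ⟨⟨g, hg⟩, rfl⟩
  exact ⟨⟨g, Subgroup.closure_mono h hg⟩, rfl⟩

lemma orbSet_subset_of_mem {S T : Set (Perm F)} (h : S ⊆ T) {x y : F} (hy : y ∈ orbSet T x) :
    orbSet S y ⊆ orbSet T x :=
  (orbSet_mono h y).trans (orbSet_eq_of_mem hy).subset

lemma orbSet_subset_of_mapsTo {S : Set (Perm F)} (hS : ∀ s ∈ S, s * s = 1) {T : Set F}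
    (hT : ∀ s ∈ S, MapsTo s T T) {y : F} (hy : y ∈ T) : orbSet S y ⊆ T := by
  have key : ∀ g ∈ Subgroup.closure S, MapsTo ⇑g T T ∧ MapsTo ⇑(g⁻¹) T T := by
    intro g hg
    induction hg using Subgroup.closure_induction with
    | mem s hs => rw [inv_eq_of_mul_eq_one_left (hS s hs)]; exact ⟨hT s hs, hT s hs⟩
    | one => exact ⟨mapsTo_id T, mapsTo_id T⟩
    | mul a b _ _ ha hb => rw [mul_inv_rev]; exact ⟨ha.1.comp hb.1, hb.2.comp ha.2⟩
    | inv a _ ha => rw [inv_inv]; exact ha.symm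
  rintro _ ⟨⟨g, hg⟩, rfl⟩
  exact (key g hg).1 hy

lemma orbSet_subset_orbSet_of_eqOn {S T : Set (Perm F)} (hS : ∀ s ∈ S, s * s = 1) {x : F}
    (h : ∀ s ∈ S, ∃ t ∈ T, EqOn s t (orbSet S x)) : orbSet S x ⊆ orbSet T x := by
  refine (orbSet_subset_of_mapsTo hS (T := orbSet S x ∩ orbSet T x) ?_
    ⟨mem_orbSet_self S x, mem_orbSet_self T x⟩).trans inter_subset_right
  intro s hs w ⟨hwS, hwT⟩
  obtain ⟨t, ht, hst⟩ := h s hs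
  exact ⟨apply_mem_orbSet hs hwS, hst hwS ▸ apply_mem_orbSet ht hwT⟩

lemma orbCount_eq_card_range (S : Set (Perm F)) : orbCount S = Nat.card (range (orbSet S)) := by
  rw [orbCount, Nat.card_congr (Equiv.ofInjective _ MulAction.orbitRel.Quotient.orbit_injective)]
  congr 2
  exact (Quotient.mk''_surjective.range_comp _).symm

lemma card_image_orbSet_eq_one {S : Set (Perm F)} {x : F} {e : Set F} (h : orbSet S x = e) :
    Nat.card (orbSet S '' e) = 1 := by
  subst h
  have : orbSet S '' orbSet S x = {orbSet S x} :=
    eq_singleton_iff_unique_mem.mpr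
      ⟨⟨x, mem_orbSet_self S x, rfl⟩, by rintro _ ⟨y, hy, rfl⟩; exact orbSet_eq_of_mem hy⟩
  rw [this, Nat.card_unique]

end Orbits

section Restriction

variable {F : Type*} {p : F → Prop}

def IsRestriction (t : Perm (Subtype p)) (s : Perm F) : Prop :=
  ∀ a, (t a : F) = s a

def IsRestrictionSet (S₀ : Set (Perm (Subtype p))) (S : Set (Perm F)) : Prop :=
  (∀ s ∈ S, ∃ t ∈ S₀, IsRestriction t s) ∧ ∀ t ∈ S₀, ∃ s ∈ S, IsRestriction t s

namespace IsRestriction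

lemma one : IsRestriction (1 : Perm (Subtype p)) 1 := fun _ => rfl

lemma mul {t t' : Perm (Subtype p)} {s s' : Perm F} (h : IsRestriction t s)
    (h' : IsRestriction t' s') : IsRestriction (t * t') (s * s') := fun a => by
  rw [Perm.mul_apply, Perm.mul_apply, h, h']

lemma inv {t : Perm (Subtype p)} {s : Perm F} (h : IsRestriction t s) :
    IsRestriction t⁻¹ s⁻¹ := fun a => by
  rw [Perm.eq_inv_iff_eq, ← h]
  exact congrArg Subtype.val (t.apply_symm_apply a)

end IsRestriction

namespace IsRestrictionSet

lemma singleton {t : Perm (Subtype p)} {s : Perm F} (h : IsRestriction t s) :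
    IsRestrictionSet {t} {s} :=
  ⟨by rintro _ rfl; exact ⟨t, rfl, h⟩, by rintro _ rfl; exact ⟨s, rfl, h⟩⟩

lemma insert {t : Perm (Subtype p)} {s : Perm F} (h : IsRestriction t s)
    {S₀ : Set (Perm (Subtype p))} {S : Set (Perm F)} (hS : IsRestrictionSet S₀ S) :
    IsRestrictionSet (insert t S₀) (insert s S) := by
  refine ⟨?_, ?_⟩
  · rintro s' (rfl | hs')
    · exact ⟨t, mem_insert _ _, h⟩
    · obtain ⟨t', ht', h'⟩ := hS.1 s' hs'
      exact ⟨t', mem_insert_of_mem _ ht', h'⟩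
  · rintro t' (rfl | ht')
    · exact ⟨s, mem_insert _ _, h⟩
    · obtain ⟨s', hs', h'⟩ := hS.2 t' ht'
      exact ⟨s', mem_insert_of_mem _ hs', h'⟩

variable {S₀ : Set (Perm (Subtype p))} {S : Set (Perm F)}

lemma exists_mem_closure_of_mem_closure_right (hS : IsRestrictionSet S₀ S) {s : Perm F}
    (hs : s ∈ Subgroup.closure S) : ∃ t ∈ Subgroup.closure S₀, IsRestriction t s := by
  induction hs using Subgroup.closure_induction with
  | mem s hs =>
    obtain ⟨t, ht, h⟩ := hS.1 s hs
    exact ⟨t, Subgroup.subset_closure ht, h⟩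
  | one => exact ⟨1, one_mem _, .one⟩
  | mul _ _ _ _ ih ih' =>
    obtain ⟨⟨t, ht, h⟩, ⟨t', ht', h'⟩⟩ := And.intro ih ih'
    exact ⟨t * t', mul_mem ht ht', h.mul h'⟩
  | inv _ _ ih =>
    obtain ⟨t, ht, h⟩ := ih
    exact ⟨t⁻¹, inv_mem ht, h.inv⟩

lemma exists_mem_closure_of_mem_closure_left (hS : IsRestrictionSet S₀ S) {t : Perm (Subtype p)}
    (ht : t ∈ Subgroup.closure S₀) : ∃ s ∈ Subgroup.closure S, IsRestriction t s := by
  induction ht using Subgroup.closure_induction with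
  | mem t ht =>
    obtain ⟨s, hs, h⟩ := hS.2 t ht
    exact ⟨s, Subgroup.subset_closure hs, h⟩
  | one => exact ⟨1, one_mem _, .one⟩
  | mul _ _ _ _ ih ih' =>
    obtain ⟨⟨s, hs, h⟩, ⟨s', hs', h'⟩⟩ := And.intro ih ih'
    exact ⟨s * s', mul_mem hs hs', h.mul h'⟩
  | inv _ _ ih =>
    obtain ⟨s, hs, h⟩ := ih
    exact ⟨s⁻¹, inv_mem hs, h.inv⟩

lemma image_val_orbSet (hS : IsRestrictionSet S₀ S) (a : Subtype p) :
    Subtype.val '' orbSet S₀ a = orbSet S a := by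
  ext y
  constructor
  · rintro ⟨_, ⟨⟨t, ht⟩, rfl⟩, rfl⟩
    obtain ⟨s, hs, h⟩ := hS.exists_mem_closure_of_mem_closure_left ht
    exact ⟨⟨s, hs⟩, (h a).symm⟩
  · rintro ⟨⟨s, hs⟩, rfl⟩
    obtain ⟨t, ht, h⟩ := hS.exists_mem_closure_of_mem_closure_right hs
    exact ⟨t a, ⟨⟨t, ht⟩, rfl⟩, h a⟩

lemma orbCount_eq (hS : IsRestrictionSet S₀ S) :
    orbCount S₀ = Nat.card (orbSet S '' {f | p f}) := by
  rw [orbCount_eq_card_range,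
    ← Nat.card_image_of_injective (image_injective.mpr Subtype.val_injective), ← range_comp,
    ← Subtype.range_coe_subtype, ← range_comp,
    show image Subtype.val ∘ orbSet S₀ = orbSet S ∘ Subtype.val from funext hS.image_val_orbSet]

end IsRestrictionSet

end Restriction

section Counting

variable {F : Type*} [Finite F]

lemma orbCount_eq_add {S : Set (Perm F)} {e : Set F} (he : ∀ y ∈ e, orbSet S y ⊆ e)
    {S₀ : Set (Perm {f : F // f ∉ e})} (hS : IsRestrictionSet S₀ S) :
    orbCount S = Nat.card (orbSet S '' e) + orbCount S₀ := by
  have hdisj : Disjoint (orbSet S '' e) (orbSet S '' eᶜ) := by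
    rw [disjoint_left]
    rintro _ ⟨y, hy, rfl⟩ ⟨z, hz, hzy⟩
    exact hz (he y hy (hzy ▸ mem_orbSet_self S z))
  rw [hS.orbCount_eq, orbCount_eq_card_range, ← image_univ, ← union_compl_self e, image_union,
    Nat.card_coe_set_eq, Nat.card_coe_set_eq, Nat.card_coe_set_eq, ncard_union_eq hdisj]
  rfl

lemma genus_sub_genus_eq {θ σ φ : Perm F} {e : Set F} (he : ∀ y ∈ e, orbSet {θ, σ, φ} y ⊆ e)
    {θ₀ σ₀ φ₀ : Perm {f : F // f ∉ e}} (hθ : IsRestriction θ₀ θ) (hσ : IsRestriction σ₀ σ)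
    (hφ : IsRestriction φ₀ φ) :
    genus θ σ φ - genus θ₀ σ₀ φ₀ = (Nat.card (orbSet {θ, σ} '' e) : ℤ)
      - Nat.card (orbSet {σ, φ} '' e) - Nat.card (orbSet {θ, φ} '' e)
      + 2 * Nat.card (orbSet {θ, σ, φ} '' e) := by
  have split : ∀ {S : Set (Perm F)} {S₀ : Set (Perm {f : F // f ∉ e})}, S ⊆ {θ, σ, φ} →
      IsRestrictionSet S₀ S → orbCount S = Nat.card (orbSet S '' e) + orbCount S₀ :=
    fun hsub hS => orbCount_eq_add (fun y hy => (orbSet_mono hsub y).trans (he y hy)) hS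
  rw [genus, genus, split (by simp [insert_subset_iff]) (.insert hθ (.singleton hσ)),
    split (subset_insert _ _) (.insert hσ (.singleton hφ)),
    split (by simp [insert_subset_iff]) (.insert hθ (.singleton hφ)),
    split subset_rfl (.insert hθ (.insert hσ (.singleton hφ)))]
  push_cast
  ring

end Counting

lemma IsEdgeDeletion.isRestriction {F : Type*} {θ σ φ : Perm F} {e : Set F}
    {θ₀ σ₀ φ₀ : Perm {f : F // f ∉ e}} (h : IsEdgeDeletion σ φ e θ₀ σ₀ φ₀ θ)
    (hφ : MapsTo φ eᶜ eᶜ) :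
    IsRestriction θ₀ θ ∧ IsRestriction σ₀ σ ∧ IsRestriction φ₀ φ := by
  refine ⟨fun a => (h.1 a).1, fun a => (h.1 a).2, fun a => ?_⟩
  obtain ⟨m, -, hm, hφ₀⟩ := h.2 a
  cases m with
  | zero => simpa using hφ₀
  | succ m => exact absurd (by simpa using hm 0 m.succ_pos) (hφ a.2)

section SmallOrbits

variable {F : Type*} [Finite F] {S : Set (Perm F)}

lemma one_lt_ncard_orbSet {s : Perm F} (hs : s ∈ S) {y : F} (hy : s y ≠ y) :
    1 < (orbSet S y).ncard :=
  (one_lt_ncard_iff).mpr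
    ⟨s y, y, apply_mem_orbSet hs (mem_orbSet_self S y), mem_orbSet_self S y, hy⟩

lemma apply_eq_apply_of_card_orbSet_eq_two {s t : Perm F} (hs : s ∈ S) (ht : t ∈ S) {y : F}
    (hsy : s y ≠ y) (hty : t y ≠ y) (hy : Nat.card (orbSet S y) = 2) : s y = t y := by
  by_contra hst
  have : 2 < (orbSet S y).ncard := (two_lt_ncard_iff).mpr
    ⟨y, s y, t y, mem_orbSet_self S y, apply_mem_orbSet hs (mem_orbSet_self S y),
      apply_mem_orbSet ht (mem_orbSet_self S y), hsy.symm, hty.symm, hst⟩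
  rw [← Nat.card_coe_set_eq] at this
  omega

lemma card_image_orbSet_eq_one_or_two {e : Set F} (he : ∀ y ∈ e, orbSet S y ⊆ e)
    (hcard : e.ncard = 4) {s : Perm F} (hs : s ∈ S) (hfix : ∀ y, s y ≠ y) :
    Nat.card (orbSet S '' e) = 1 ∨
      (Nat.card (orbSet S '' e) = 2 ∧ ∀ f ∈ e, Nat.card (orbSet S f) = 2) := by
  obtain ⟨x, hx⟩ : e.Nonempty := nonempty_of_ncard_ne_zero (by omega)
  by_cases hex : e ⊆ orbSet S x
  · left
    exact card_image_orbSet_eq_one ((he x hx).antisymm hex)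
  obtain ⟨z, hz, hzx⟩ := not_subset.mp hex
  have hdisj : Disjoint (orbSet S x) (orbSet S z) := disjoint_left.mpr fun w hwx hwz => hzx <| by
    rw [← orbSet_eq_of_mem hwx, orbSet_eq_of_mem hwz]
    exact mem_orbSet_self S z
  have hunion := ncard_union_eq hdisj
  have hle : (orbSet S x ∪ orbSet S z).ncard ≤ e.ncard :=
    ncard_le_ncard (union_subset (he x hx) (he z hz))
  have hx2 := one_lt_ncard_orbSet hs (hfix x)
  have hz2 := one_lt_ncard_orbSet hs (hfix z)
  have hunion_eq : orbSet S x ∪ orbSet S z = e :=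
    eq_of_subset_of_ncard_le (union_subset (he x hx) (he z hz)) (by omega)
  have horb : ∀ f ∈ e, orbSet S f = orbSet S x ∨ orbSet S f = orbSet S z := fun f hf => by
    rw [← hunion_eq] at hf
    exact hf.imp orbSet_eq_of_mem orbSet_eq_of_mem
  have himage : orbSet S '' e = {orbSet S x, orbSet S z} := by
    refine Subset.antisymm ?_ ?_
    · rintro _ ⟨f, hf, rfl⟩
      exact horb f hf
    · rintro _ (rfl | rfl)
      exacts [⟨x, hx, rfl⟩, ⟨z, hz, rfl⟩]
  right
  refine ⟨?_, fun f hf => ?_⟩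
  · rw [himage, Nat.card_coe_set_eq, ncard_pair]
    exact fun h => hzx (h ▸ mem_orbSet_self S z)
  · rw [Nat.card_coe_set_eq]
    rcases horb f hf with h | h <;> rw [h] <;> omega

lemma orbSet_subset_orbSet_of_card_orbSet_eq_two {θ σ φ : Perm F} (hθ : θ * θ = 1)
    (hσ : σ * σ = 1) (hσfix : ∀ y, σ y ≠ y) (hφfix : ∀ y, φ y ≠ y) {x : F}
    (hV : ∀ f ∈ orbSet {θ, σ} x, Nat.card (orbSet {σ, φ} f) = 2) :
    orbSet {θ, σ} x ⊆ orbSet {θ, φ} x := by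
  refine orbSet_subset_orbSet_of_eqOn (by rintro s (rfl | rfl) <;> assumption) ?_
  rintro s (rfl | rfl)
  · exact ⟨s, mem_insert _ _, eqOn_refl _ _⟩
  · exact ⟨φ, by simp, fun f hf => apply_eq_apply_of_card_orbSet_eq_two (S := {s, φ})
      (mem_insert _ _) (by simp) (hσfix f) (hφfix f) (hV f hf)⟩

end SmallOrbits

theorem stmt11 {F : Type*} [Fintype F]
    (θ σ' φ' : Equiv.Perm F) (h : IsGraphEmb θ σ' φ') (x : F)
    (e : Set F) (he : e = orbSet {θ, σ'} x)
    (hcomp : e = orbSet {θ, σ', φ'} x)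
    (θ₀ σ₀ φ₀ : Equiv.Perm {f : F // f ∉ e})
    (hdel : IsEdgeDeletion σ' φ' e θ₀ σ₀ φ₀ θ) :
    (Nat.card ((fun f => orbSet {σ', φ'} f) '' e) = 1 ∨
      (Nat.card ((fun f => orbSet {σ', φ'} f) '' e) = 2 ∧
        ∀ f ∈ e, Nat.card (orbSet {σ', φ'} f) = 2)) ∧
    (Nat.card ((fun f => orbSet {σ', φ'} f) '' e) = 1 →
      ∃ k ∈ ({1, 2} : Set ℤ), k = (Nat.card ((fun f => orbSet {θ, φ'} f) '' e) : ℤ) ∧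
        genus θ σ' φ' - genus θ₀ σ₀ φ₀ = 2 - k) ∧
    (Nat.card ((fun f => orbSet {σ', φ'} f) '' e) = 2 →
      genus θ σ' φ' = genus θ₀ σ₀ φ₀) := by
  obtain ⟨⟨hθθ, hθ⟩, ⟨hσσ, hσ⟩, ⟨-, hφ⟩, hedge⟩ := h
  have hcard : e.ncard = 4 := by rw [he, ← Nat.card_coe_set_eq]; exact hedge x
  have hinside : ∀ {S}, S ⊆ {θ, σ', φ'} → ∀ y ∈ e, orbSet S y ⊆ e := fun hS y hy => by
    rw [hcomp] at hy ⊢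
    exact orbSet_subset_of_mem hS hy
  have hφe : MapsTo φ' eᶜ eᶜ := fun y hy hφy => hy <| by
    rw [hcomp] at hφy ⊢
    exact (apply_mem_orbSet_iff (by simp)).mp hφy
  obtain ⟨hθ₀, hσ₀, hφ₀⟩ := hdel.isRestriction hφe
  have hgenus := genus_sub_genus_eq (hinside subset_rfl) hθ₀ hσ₀ hφ₀
  rw [card_image_orbSet_eq_one he.symm, card_image_orbSet_eq_one hcomp.symm] at hgenus
  have hV := card_image_orbSet_eq_one_or_two (hinside (subset_insert _ _)) hcard
    (mem_insert σ' _) hσ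
  have hF := card_image_orbSet_eq_one_or_two (hinside (S := {θ, φ'}) (by simp [insert_subset_iff]))
    hcard (mem_insert θ _) hθ
  refine ⟨hV, fun hV1 => ⟨_, ?_, rfl, by rw [hgenus, hV1]; ring⟩, fun hV2 => ?_⟩
  · rcases hF with hF | ⟨hF, -⟩ <;> rw [hF] <;> simp
  have hvert := (hV.resolve_left (by rw [hV2]; norm_num)).2
  have hface : orbSet {θ, φ'} x = e :=
    (hinside (S := {θ, φ'}) (by simp [insert_subset_iff]) x (he ▸ mem_orbSet_self _ x)).antisymm
      (he ▸ orbSet_subset_orbSet_of_card_orbSet_eq_two hθθ hσσ hσ hφ (he ▸ hvert))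
  rw [hV2, card_image_orbSet_eq_one hface] at hgenus
  push_cast at hgenus
  linarith
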